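/- Consider the binary model 𝒳 = 𝒴 = 𝒮 = {0,1} with i.i.d. equiprobable demand X₁,…,X_T (P(X_t = 0) = P(X_t = 1) = 1/2) independent of the initial state S₁, battery dynamics S_{t+1} = S_t + Y_t − X_t, and the deterministic policy Y_t = 1 − S_t. This policy is feasible (Y_t ∈ 𝒴₀(S_t − X_t) almost surely), and its leakage satisfies (1/T) I(S₁, X^T; Y^T) ≥ (T−1)/T, since X_t = Y_{t+1} for 1 ≤ t ≤ T−1, so that X^{T−1} is a deterministic function of Y^T. -/

import Mathlib

open Finset
open scoped Classical

namespace SmartMeter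

/-! ### Basic information measures for finitely supported distributions.
All entropies and mutual informations are in bits (base-2 logarithms). -/

/-- Probability that the random variable `Z` takes the value `z` under the pmf `p`. -/
noncomputable def pr {Ω α : Type*} [Fintype Ω] [DecidableEq α]
    (p : Ω → ℝ) (Z : Ω → α) (z : α) : ℝ :=
  ∑ ω ∈ Finset.univ.filter (fun ω => Z ω = z), p ω

/-- Shannon entropy (in bits) of the random variable `Z` under the pmf `p`. -/
noncomputable def ent {Ω α : Type*} [Fintype Ω] [DecidableEq α]
    (p : Ω → ℝ) (Z : Ω → α) : ℝ :=
  -∑ z ∈ Finset.univ.image Z, pr p Z z * Real.logb 2 (pr p Z z)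

/-- Mutual information `I(A; B)`. -/
noncomputable def mutInfo {Ω α β : Type*} [Fintype Ω] [DecidableEq α] [DecidableEq β]
    (p : Ω → ℝ) (A : Ω → α) (B : Ω → β) : ℝ :=
  ent p A + ent p B - ent p (fun ω => (A ω, B ω))

/-- Conditional entropy `H(A | C)`. -/
noncomputable def condEnt {Ω α γ : Type*} [Fintype Ω] [DecidableEq α] [DecidableEq γ]
    (p : Ω → ℝ) (A : Ω → α) (C : Ω → γ) : ℝ :=
  ent p (fun ω => (A ω, C ω)) - ent p C

/-- Conditional mutual information `I(A; B | C)`. -/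
noncomputable def condMutInfo {Ω α β γ : Type*} [Fintype Ω] [DecidableEq α] [DecidableEq β]
    [DecidableEq γ] (p : Ω → ℝ) (A : Ω → α) (B : Ω → β) (C : Ω → γ) : ℝ :=
  ent p (fun ω => (A ω, C ω)) + ent p (fun ω => (B ω, C ω))
    - ent p (fun ω => (A ω, B ω, C ω)) - ent p C

/-- `p` is a probability mass function on the finite type `Ω`. -/
def IsPMF {Ω : Type*} [Fintype Ω] (p : Ω → ℝ) : Prop :=
  (∀ ω, 0 ≤ p ω) ∧ ∑ ω, p ω = 1

/-- Extension of a pmf on `{0, …, n}` to an integer-indexed function (zero out of range). -/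
noncomputable def extZ {n : ℕ} (f : Fin (n + 1) → ℝ) (k : ℤ) : ℝ :=
  if h : 0 ≤ k ∧ k ≤ (n : ℤ) then f ⟨k.toNat, by omega⟩ else 0

/-! ### The single-letter quantity `J*` -/

/-- `I(S - X; X)` for independent `X ~ PX` on `{0,…,mx}` and `S ~ θ` on `{0,…,ms}`. -/
noncomputable def iidMI (mx ms : ℕ) (PX : Fin (mx + 1) → ℝ) (θ : Fin (ms + 1) → ℝ) : ℝ :=
  mutInfo (fun ω : Fin (mx + 1) × Fin (ms + 1) => PX ω.1 * θ ω.2)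
    (fun ω => ((ω.2 : ℕ) : ℤ) - ((ω.1 : ℕ) : ℤ)) (fun ω => ω.1)

/-- `J* = min over pmfs θ on 𝒮 of I(S - X; X)`. -/
noncomputable def Jstar (mx ms : ℕ) (PX : Fin (mx + 1) → ℝ) : ℝ :=
  sInf {r : ℝ | ∃ θ : Fin (ms + 1) → ℝ, IsPMF θ ∧ iidMI mx ms PX θ = r}

/-! ### The structured policy `b*` -/

/-- `ξ(w) = Σ_{(x,s) : s - x = w} PX(x) θ(s)`, the pmf of `W = S - X`. -/
noncomputable def xiOf (mx ms : ℕ) (PX : Fin (mx + 1) → ℝ) (θ : Fin (ms + 1) → ℝ)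
    (w : ℤ) : ℝ :=
  ∑ x : Fin (mx + 1), ∑ s : Fin (ms + 1),
    if ((s : ℕ) : ℤ) - ((x : ℕ) : ℤ) = w then PX x * θ s else 0

/-- The structured policy with respect to `(θ, ξ)`:
`b(y|w) = PX(y) θ(y + w) / ξ(w)` for `y ∈ 𝒳 ∩ 𝒴₀(w)` (when `ξ(w) > 0`), else `0`. -/
noncomputable def bstar (mx my ms : ℕ) (PX : Fin (mx + 1) → ℝ) (θ : Fin (ms + 1) → ℝ)
    (w : ℤ) (y : Fin (my + 1)) : ℝ :=
  if xiOf mx ms PX θ w = 0 then 0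
  else extZ PX ((y : ℕ) : ℤ) * extZ θ (((y : ℕ) : ℤ) + w) / xiOf mx ms PX θ w

/-! ### Trajectory spaces, policies and induced joint laws.
Time is indexed from `0`; `ω = (s₁, x, y)` records the initial battery state `S₁ = ω.1`,
the demands `X_{t+1} = ω.2.1 t` and the outputs `Y_{t+1} = ω.2.2 t` for `t = 0, …, T-1`. -/

/-- Trajectories of horizon `T`. -/
abbrev Traj (mx my ms T : ℕ) :=
  Fin (ms + 1) × (Fin T → Fin (mx + 1)) × (Fin T → Fin (my + 1))

variable {mx my ms T : ℕ}

/-- Demand at (0-based) time `t`, as an integer (junk value `0` for `t ≥ T`). -/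
def Xat (ω : Traj mx my ms T) (t : ℕ) : ℤ :=
  if h : t < T then ((ω.2.1 ⟨t, h⟩ : ℕ) : ℤ) else 0

/-- Output at (0-based) time `t`, as an integer (junk value `0` for `t ≥ T`). -/
def Yat (ω : Traj mx my ms T) (t : ℕ) : ℤ :=
  if h : t < T then ((ω.2.2 ⟨t, h⟩ : ℕ) : ℤ) else 0

/-- Battery state at (0-based) time `t`: `S_{t+1} = S_t + Y_t - X_t`, `Sat ω 0 = S₁`. -/
def Sat (ω : Traj mx my ms T) (t : ℕ) : ℤ :=
  ((ω.1 : ℕ) : ℤ) + ∑ i ∈ Finset.range t, (Yat ω i - Xat ω i)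

/-- `W_t = S_t - X_t`. -/
def Wat (ω : Traj mx my ms T) (t : ℕ) : ℤ := Sat ω t - Xat ω t

/-- A general causal (class `Q_A`) randomized battery policy:
`q_t(y_t | x^t, s^t, y^{t-1})`; since `s^t` is determined by `(s₁, x^{t-1}, y^{t-1})`,
the policy is a function of `(x^t, s₁, y^{t-1})`. -/
def PolicyA (mx my ms : ℕ) : Type :=
  (t : ℕ) → (Fin (t + 1) → Fin (mx + 1)) → Fin (ms + 1) → (Fin t → Fin (my + 1)) →
    Fin (my + 1) → ℝ

/-- A class-`Q_B` policy: `q_t(y_t | x_t, s_t, y^{t-1})`. -/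
def PolicyB (mx my ms : ℕ) : Type :=
  (t : ℕ) → Fin (mx + 1) → ℤ → (Fin t → Fin (my + 1)) → Fin (my + 1) → ℝ

/-- The battery state `S_t` computed from `s₁` and the history `(x^t, y^{t-1})`. -/
def hstate {t : ℕ} (s1 : Fin (ms + 1)) (x : Fin (t + 1) → Fin (mx + 1))
    (y : Fin t → Fin (my + 1)) : ℤ :=
  ((s1 : ℕ) : ℤ) + ∑ i : Fin t, (((y i : ℕ) : ℤ) - ((x i.castSucc : ℕ) : ℤ))

/-- Each `q_t(· | x^t, s^t, y^{t-1})` is a pmf on `𝒴`. -/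
def CondPMFA (q : PolicyA mx my ms) : Prop :=
  ∀ (t : ℕ) (x : Fin (t + 1) → Fin (mx + 1)) (s1 : Fin (ms + 1)) (y : Fin t → Fin (my + 1)),
    (∀ yt, 0 ≤ q t x s1 y yt) ∧ ∑ yt, q t x s1 y yt = 1

/-- Feasibility of a class-`Q_A` policy: conditional pmfs supported on
`𝒴₀(s_t - x_t) = {y ∈ 𝒴 : s_t - x_t + y ∈ 𝒮}`. -/
def FeasibleA (q : PolicyA mx my ms) : Prop :=
  CondPMFA q ∧
  ∀ (t : ℕ) (x : Fin (t + 1) → Fin (mx + 1)) (s1 : Fin (ms + 1)) (y : Fin t → Fin (my + 1)),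
    ∀ yt, q t x s1 y yt ≠ 0 →
      0 ≤ hstate s1 x y - ((x (Fin.last t) : ℕ) : ℤ) + ((yt : ℕ) : ℤ) ∧
      hstate s1 x y - ((x (Fin.last t) : ℕ) : ℤ) + ((yt : ℕ) : ℤ) ≤ (ms : ℤ)

/-- Each `q_t(· | x_t, s_t, y^{t-1})` is a pmf on `𝒴`. -/
def CondPMFB (q : PolicyB mx my ms) : Prop :=
  ∀ (t : ℕ) (xt : Fin (mx + 1)) (s : ℤ) (y : Fin t → Fin (my + 1)),
    (∀ yt, 0 ≤ q t xt s y yt) ∧ ∑ yt, q t xt s y yt = 1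

/-- Feasibility of a class-`Q_B` policy. -/
def FeasibleB (q : PolicyB mx my ms) : Prop :=
  CondPMFB q ∧
  ∀ (t : ℕ) (xt : Fin (mx + 1)) (s : ℤ) (y : Fin t → Fin (my + 1)),
    0 ≤ s → s ≤ (ms : ℤ) →
    ∀ yt, q t xt s y yt ≠ 0 →
      0 ≤ s - ((xt : ℕ) : ℤ) + ((yt : ℕ) : ℤ) ∧
      s - ((xt : ℕ) : ℤ) + ((yt : ℕ) : ℤ) ≤ (ms : ℤ)

/-- The demand prefix `x^t = (x_0, …, x_t)` of a trajectory. -/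
def prefX (ω : Traj mx my ms T) (t : Fin T) : Fin ((t : ℕ) + 1) → Fin (mx + 1) :=
  fun i => ω.2.1 ⟨(i : ℕ), lt_of_le_of_lt (Nat.lt_succ_iff.mp i.isLt) t.isLt⟩

/-- The output prefix `y^{t-1} = (y_0, …, y_{t-1})` of a trajectory. -/
def prefY (ω : Traj mx my ms T) (t : Fin T) : Fin (t : ℕ) → Fin (my + 1) :=
  fun i => ω.2.2 ⟨(i : ℕ), i.isLt.trans t.isLt⟩

/-- Joint law on trajectories induced by i.i.d. demand `PX`, initial battery pmf `PS1`
(independent of the demand), and a class-`Q_A` policy `q`. -/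
noncomputable def jointA (PS1 : Fin (ms + 1) → ℝ) (PX : Fin (mx + 1) → ℝ)
    (q : PolicyA mx my ms) (T : ℕ) (ω : Traj mx my ms T) : ℝ :=
  PS1 ω.1 * ∏ t : Fin T,
    (PX (ω.2.1 t) * q (t : ℕ) (prefX ω t) ω.1 (prefY ω t) (ω.2.2 t))

/-- Weight of a demand trajectory under a Markov chain `(PX1, Qm)`. -/
noncomputable def markovWt (PX1 : Fin (mx + 1) → ℝ) (Qm : Fin (mx + 1) → Fin (mx + 1) → ℝ)
    {T : ℕ} (x : Fin T → Fin (mx + 1)) : ℝ :=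
  ∏ t : Fin T,
    if _h : (t : ℕ) = 0 then PX1 (x t)
    else Qm (x ⟨(t : ℕ) - 1, lt_of_le_of_lt (Nat.sub_le _ _) t.isLt⟩) (x t)

/-- Joint law on trajectories induced by Markov demand and a class-`Q_A` policy. -/
noncomputable def jointAMarkov (PS1 : Fin (ms + 1) → ℝ) (PX1 : Fin (mx + 1) → ℝ)
    (Qm : Fin (mx + 1) → Fin (mx + 1) → ℝ) (q : PolicyA mx my ms) (T : ℕ)
    (ω : Traj mx my ms T) : ℝ :=
  PS1 ω.1 * markovWt PX1 Qm ω.2.1 *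
    ∏ t : Fin T, q (t : ℕ) (prefX ω t) ω.1 (prefY ω t) (ω.2.2 t)

/-- Joint law on trajectories induced by Markov demand and a class-`Q_B` policy. -/
noncomputable def jointBMarkov (PS1 : Fin (ms + 1) → ℝ) (PX1 : Fin (mx + 1) → ℝ)
    (Qm : Fin (mx + 1) → Fin (mx + 1) → ℝ) (q : PolicyB mx my ms) (T : ℕ)
    (ω : Traj mx my ms T) : ℝ :=
  PS1 ω.1 * markovWt PX1 Qm ω.2.1 *
    ∏ t : Fin T, q (t : ℕ) (ω.2.1 t) (Sat ω (t : ℕ)) (prefY ω t) (ω.2.2 t)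

/-- The memoryless time-invariant policy `q_t(y | x, s) = b*(y | s - x)`, as a member of the
class of general causal policies. -/
noncomputable def structuredPolicyA (mx my ms : ℕ) (PX : Fin (mx + 1) → ℝ)
    (θ : Fin (ms + 1) → ℝ) : PolicyA mx my ms :=
  fun t x s1 y yt => bstar mx my ms PX θ (hstate s1 x y - ((x (Fin.last t) : ℕ) : ℤ)) yt


/-- The deterministic binary policy `Y_t = 1 - S_t`, as a general causal policy on the
binary model `𝒳 = 𝒴 = 𝒮 = {0,1}`. -/
noncomputable def binFlipPolicy : PolicyA 1 1 1 :=
  fun t x s1 y yt => if ((yt : ℕ) : ℤ) = 1 - hstate s1 x y then 1 else 0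

/-!
Under `Y_t = 1 - S_t` the battery update gives `S_{t+1} = 1 - X_t`, hence `Y_{t+1} = X_t`: the
output is the deterministic sequence `(1 - S₁, X₁, …, X_{T-1})`. So `Y^T` is a function of
`(S₁, X^T)` and the leakage is `H(Y^T)`. Each output sequence pins down `X^{T-1}`, which is
uniform, so it has probability at most `2^{-(T-1)}`, whence `H(Y^T) ≥ T - 1`.
-/

section Entropy

variable {Ω α β : Type*} [Fintype Ω] [DecidableEq α] [DecidableEq β]

lemma pr_nonneg {p : Ω → ℝ} (hp : ∀ ω, 0 ≤ p ω) (Z : Ω → α) (z : α) : 0 ≤ pr p Z z :=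
  Finset.sum_nonneg fun ω _ => hp ω

lemma pr_congr {p : Ω → ℝ} {Z Z' : Ω → α} (h : ∀ ω, p ω ≠ 0 → Z ω = Z' ω) (z : α) :
    pr p Z z = pr p Z' z := by
  simp only [pr, Finset.sum_filter]
  refine Finset.sum_congr rfl fun ω _ => ?_
  by_cases hω : p ω = 0
  · simp [hω]
  · rw [h ω hω]

lemma pr_eq_zero_of_notMem {p : Ω → ℝ} {Z : Ω → α} {z : α}
    (h : z ∉ Finset.univ.image Z) : pr p Z z = 0 := by
  refine Finset.sum_eq_zero fun ω hω => absurd ?_ h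
  exact Finset.mem_image.2 ⟨ω, Finset.mem_univ _, (Finset.mem_filter.1 hω).2⟩

lemma ent_eq_sum_of_image_subset (p : Ω → ℝ) (Z : Ω → α) {s : Finset α}
    (hs : Finset.univ.image Z ⊆ s) :
    ent p Z = -∑ z ∈ s, pr p Z z * Real.logb 2 (pr p Z z) := by
  rw [ent, Finset.sum_subset hs fun z _ hz => by rw [pr_eq_zero_of_notMem hz, zero_mul]]

lemma ent_congr {p : Ω → ℝ} {Z Z' : Ω → α} (h : ∀ ω, p ω ≠ 0 → Z ω = Z' ω) :
    ent p Z = ent p Z' := by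
  let s := Finset.univ.image Z ∪ Finset.univ.image Z'
  rw [ent_eq_sum_of_image_subset p Z (s := s) Finset.subset_union_left,
    ent_eq_sum_of_image_subset p Z' (s := s) Finset.subset_union_right]
  simp only [pr_congr h]

lemma ent_comp_of_injective (p : Ω → ℝ) (Z : Ω → α) {f : α → β} (hf : Function.Injective f) :
    ent p (fun ω => f (Z ω)) = ent p Z := by
  have hpr : ∀ z, pr p (fun ω => f (Z ω)) (f z) = pr p Z z := fun z => by
    simp only [pr, hf.eq_iff]
  have himg : Finset.univ.image (fun ω => f (Z ω)) = (Finset.univ.image Z).image f :=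
    (Finset.image_image ..).symm
  rw [ent, ent, himg, Finset.sum_image fun a _ b _ hab => hf hab]
  simp only [hpr]

lemma mutInfo_eq_ent_of_ae_eq_comp {p : Ω → ℝ} {A : Ω → α} {B : Ω → β} {f : α → β}
    (h : ∀ ω, p ω ≠ 0 → B ω = f (A ω)) : mutInfo p A B = ent p B := by
  have hAB : ent p (fun ω => (A ω, B ω)) = ent p A :=
    calc ent p (fun ω => (A ω, B ω)) = ent p (fun ω => (A ω, f (A ω))) :=
          ent_congr fun ω hω => by rw [h ω hω]
      _ = ent p A := ent_comp_of_injective p A (f := fun a => (a, f a))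
          fun a b hab => congrArg Prod.fst hab
  rw [mutInfo, hAB]
  ring

lemma sum_pr_eq_one {p : Ω → ℝ} (hp : IsPMF p) (Z : Ω → α) :
    ∑ z ∈ Finset.univ.image Z, pr p Z z = 1 :=
  (Finset.sum_fiberwise_of_maps_to (fun ω _ =>
    Finset.mem_image_of_mem Z (Finset.mem_univ ω)) p).trans hp.2

lemma neg_logb_le_ent_of_pr_le {p : Ω → ℝ} (hp : IsPMF p) (Z : Ω → α) {c : ℝ}
    (hc : ∀ z, pr p Z z ≤ c) : -Real.logb 2 c ≤ ent p Z := by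
  have key : ∀ z ∈ Finset.univ.image Z,
      pr p Z z * -Real.logb 2 c ≤ -(pr p Z z * Real.logb 2 (pr p Z z)) := fun z _ => by
    rcases (pr_nonneg hp.1 Z z).eq_or_lt with h0 | h0
    · simp [← h0]
    · have := Real.logb_le_logb_of_le (b := 2) one_lt_two h0 (hc z)
      nlinarith
  calc -Real.logb 2 c = ∑ z ∈ Finset.univ.image Z, pr p Z z * -Real.logb 2 c := by
        rw [← Finset.sum_mul, sum_pr_eq_one hp, one_mul]
    _ ≤ ∑ z ∈ Finset.univ.image Z, -(pr p Z z * Real.logb 2 (pr p Z z)) :=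
        Finset.sum_le_sum key
    _ = ent p Z := by rw [ent, Finset.sum_neg_distrib]

end Entropy

section Trajectory

variable {ω : Traj mx my ms T} {t : ℕ}

lemma Xat_of_lt (ω : Traj mx my ms T) (ht : t < T) : Xat ω t = ((ω.2.1 ⟨t, ht⟩ : ℕ) : ℤ) :=
  dif_pos ht

lemma Yat_of_lt (ω : Traj mx my ms T) (ht : t < T) : Yat ω t = ((ω.2.2 ⟨t, ht⟩ : ℕ) : ℤ) :=
  dif_pos ht

lemma Xat_mem_Icc (ω : Traj mx my ms T) (t : ℕ) : Xat ω t ∈ Set.Icc 0 (mx : ℤ) := by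
  unfold Xat
  split_ifs with ht
  · exact ⟨by positivity, by have := (ω.2.1 ⟨t, ht⟩).isLt; omega⟩
  · exact ⟨le_rfl, by positivity⟩

lemma Sat_zero (ω : Traj mx my ms T) : Sat ω 0 = ((ω.1 : ℕ) : ℤ) := by
  simp [Sat]

lemma Sat_succ (ω : Traj mx my ms T) (t : ℕ) : Sat ω (t + 1) = Sat ω t + Yat ω t - Xat ω t := by
  rw [Sat, Sat, Finset.sum_range_succ]
  ring

lemma hstate_prefX_prefY (ω : Traj mx my ms T) (t : Fin T) :
    hstate ω.1 (prefX ω t) (prefY ω t) = Sat ω t := by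
  rw [hstate, Sat, ← Fin.sum_univ_eq_sum_range]
  congr 1
  refine Finset.sum_congr rfl fun i _ => ?_
  have hi : (i : ℕ) < T := i.isLt.trans t.isLt
  rw [Yat_of_lt ω hi, Xat_of_lt ω hi]
  rfl

def FollowsFlip (ω : Traj mx my ms T) : Prop := ∀ t < T, Yat ω t = 1 - Sat ω t

lemma FollowsFlip.Sat_succ (h : FollowsFlip ω) (ht : t < T) : Sat ω (t + 1) = 1 - Xat ω t := by
  rw [SmartMeter.Sat_succ, h t ht]
  ring

lemma FollowsFlip.Yat_succ (h : FollowsFlip ω) (ht : t + 1 < T) : Yat ω (t + 1) = Xat ω t := by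
  rw [h _ ht, h.Sat_succ (by omega)]
  ring

lemma followsFlip_iff :
    FollowsFlip ω ↔
      (0 < T → Yat ω 0 = 1 - ((ω.1 : ℕ) : ℤ)) ∧ ∀ t, t + 1 < T → Yat ω (t + 1) = Xat ω t := by
  refine ⟨fun h => ⟨fun hT => by rw [h 0 hT, Sat_zero], fun t => h.Yat_succ⟩, ?_⟩
  rintro ⟨h0, hsucc⟩ t ht
  induction t with
  | zero => rw [h0 ht, Sat_zero]
  | succ t ih =>
    rw [hsucc t ht, SmartMeter.Sat_succ, ih (by omega)]
    ring

end Trajectory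

section BinaryFlip

variable {n : ℕ}

lemma jointA_binFlipPolicy (PS1 : Fin 2 → ℝ) (ω : Traj 1 1 1 T) :
    jointA PS1 (fun _ => (1 / 2 : ℝ)) binFlipPolicy T ω =
      if FollowsFlip ω then PS1 ω.1 * (1 / 2) ^ T else 0 := by
  simp only [jointA, binFlipPolicy, hstate_prefX_prefY]
  rw [Finset.prod_mul_distrib, Finset.prod_const, Finset.card_univ, Fintype.card_fin,
    Finset.prod_boole]
  have hflip : (∀ t ∈ Finset.univ, ((ω.2.2 t : ℕ) : ℤ) = 1 - Sat ω t) ↔ FollowsFlip ω :=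
    ⟨fun h t ht => (Yat_of_lt ω ht).trans (h ⟨t, ht⟩ (Finset.mem_univ _)),
      fun h t _ => (Yat_of_lt ω t.isLt).symm.trans (h t t.isLt)⟩
  by_cases h : FollowsFlip ω
  · rw [if_pos (hflip.2 h), if_pos h, mul_one]
  · rw [if_neg (mt hflip.1 h), if_neg h, mul_zero, mul_zero]

lemma followsFlip_of_jointA_ne_zero {PS1 : Fin 2 → ℝ} {ω : Traj 1 1 1 T}
    (h : jointA PS1 (fun _ => (1 / 2 : ℝ)) binFlipPolicy T ω ≠ 0) : FollowsFlip ω := by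
  by_contra hω
  rw [jointA_binFlipPolicy, if_neg hω] at h
  exact h rfl

def flipOutput (s1 : Fin 2) (x : Fin (n + 1) → Fin 2) : Fin (n + 1) → Fin 2 :=
  Fin.cons s1.rev (Fin.init x)

lemma followsFlip_iff_eq_flipOutput (ω : Traj 1 1 1 (n + 1)) :
    FollowsFlip ω ↔ ω.2.2 = flipOutput ω.1 ω.2.1 := by
  rw [followsFlip_iff, funext_iff, Fin.forall_fin_succ]
  simp only [flipOutput, Fin.cons_zero, Fin.cons_succ, Fin.init, Fin.ext_iff, Fin.val_rev]
  refine and_congr ?_ ?_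
  · rw [Yat_of_lt ω (Nat.succ_pos n), Fin.zero_eta]
    have := ω.1.isLt
    simp only [Nat.succ_pos, true_implies]
    omega
  · rw [Fin.forall_iff]
    refine forall_congr' fun t => ?_
    rw [Nat.add_lt_add_iff_right]
    refine forall_congr' fun ht => ?_
    rw [Yat_of_lt ω (by omega), Xat_of_lt ω (by omega), Nat.cast_inj]
    rfl

lemma sum_mul_jointA_binFlipPolicy (PS1 : Fin 2 → ℝ) (g : Traj 1 1 1 (n + 1) → ℝ) :
    ∑ ω, g ω * jointA PS1 (fun _ => (1 / 2 : ℝ)) binFlipPolicy (n + 1) ω =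
      ∑ s1, ∑ x, g (s1, x, flipOutput s1 x) * (PS1 s1 * (1 / 2) ^ (n + 1)) := by
  simp only [Fintype.sum_prod_type, jointA_binFlipPolicy, followsFlip_iff_eq_flipOutput, mul_ite,
    mul_zero, Finset.sum_ite_eq', Finset.mem_univ, if_true]

lemma isPMF_jointA_binFlipPolicy {PS1 : Fin 2 → ℝ} (hPS1 : IsPMF PS1) :
    IsPMF (jointA PS1 (fun _ => (1 / 2 : ℝ)) binFlipPolicy (n + 1)) := by
  refine ⟨fun ω => ?_, ?_⟩
  · rw [jointA_binFlipPolicy]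
    have := hPS1.1 ω.1
    split_ifs <;> positivity
  · have h := sum_mul_jointA_binFlipPolicy PS1 (n := n) fun _ => 1
    simp only [one_mul, Finset.sum_const, Finset.card_univ, Fintype.card_fun,
      Fintype.card_fin, nsmul_eq_mul] at h
    rw [h, ← Finset.mul_sum, ← Finset.sum_mul, hPS1.2]
    push_cast
    rw [one_mul, ← mul_pow]
    norm_num

lemma sum_ite_init_eq_card {α : Type*} [Fintype α] [DecidableEq α] (z : Fin n → α) :
    ∑ x : Fin (n + 1) → α, (if Fin.init x = z then 1 else 0 : ℝ) = Fintype.card α := by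
  rw [← (Fin.snocEquiv fun _ => α).sum_comp, Fintype.sum_prod_type]
  have hinit : ∀ (b : α) (w : Fin n → α), Fin.init ((Fin.snocEquiv fun _ => α) (b, w)) = w :=
    fun _ _ => Fin.init_snoc _ _
  simp only [hinit, Finset.sum_ite_eq', Finset.mem_univ, if_true, Finset.sum_const,
    Finset.card_univ, nsmul_eq_mul, mul_one]

lemma sum_ite_flipOutput_eq_le_two (s1 : Fin 2) (y : Fin (n + 1) → Fin 2) :
    ∑ x, (if flipOutput s1 x = y then 1 else 0 : ℝ) ≤ 2 :=
  calc ∑ x, (if flipOutput s1 x = y then 1 else 0 : ℝ)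
      ≤ ∑ x : Fin (n + 1) → Fin 2,
          (if Fin.init x = Fin.tail (α := fun _ => Fin 2) y then 1 else 0 : ℝ) := by
        refine Finset.sum_le_sum fun x _ => ?_
        by_cases h : flipOutput s1 x = y
        · rw [if_pos h, if_pos (by rw [← h, flipOutput, Fin.tail_cons])]
        · rw [if_neg h]
          split_ifs <;> norm_num
    _ = 2 := by rw [sum_ite_init_eq_card, Fintype.card_fin, Nat.cast_ofNat]

lemma pr_output_jointA_binFlipPolicy_le {PS1 : Fin 2 → ℝ} (hPS1 : IsPMF PS1)
    (y : Fin (n + 1) → Fin 2) :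
    pr (jointA PS1 (fun _ => (1 / 2 : ℝ)) binFlipPolicy (n + 1)) (fun ω => ω.2.2) y ≤
      (1 / 2) ^ n := by
  let p := jointA PS1 (fun _ => (1 / 2 : ℝ)) binFlipPolicy (n + 1)
  calc pr p (fun ω => ω.2.2) y = ∑ ω, (if ω.2.2 = y then 1 else 0) * p ω := by
        simp only [pr, Finset.sum_filter, boole_mul]
    _ = ∑ s1, (∑ x, if flipOutput s1 x = y then 1 else 0) * (PS1 s1 * (1 / 2) ^ (n + 1)) := by
        rw [sum_mul_jointA_binFlipPolicy PS1 fun ω => if ω.2.2 = y then 1 else 0]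
        simp only [Finset.sum_mul]
    _ ≤ ∑ s1, 2 * (PS1 s1 * (1 / 2) ^ (n + 1)) := by
        refine Finset.sum_le_sum fun s1 _ => ?_
        have := hPS1.1 s1
        exact mul_le_mul_of_nonneg_right (sum_ite_flipOutput_eq_le_two s1 y) (by positivity)
    _ = (1 / 2) ^ n := by
        rw [← Finset.mul_sum, ← Finset.sum_mul, hPS1.2]
        ring

end BinaryFlip

theorem binary_flip_policy_leakage_general (T : ℕ)
    (PS1 : Fin 2 → ℝ) (hPS1 : IsPMF PS1) :
    let p := jointA (mx := 1) (my := 1) (ms := 1) PS1 (fun _ => (1 / 2 : ℝ))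
      binFlipPolicy T
    -- feasibility: on the support, the battery state stays in 𝒮 = {0, 1}
    (∀ ω : Traj 1 1 1 T, p ω ≠ 0 → ∀ t : ℕ, t < T →
        0 ≤ Sat ω (t + 1) ∧ Sat ω (t + 1) ≤ 1) ∧
    -- on the support, X_t = Y_{t+1}
    (∀ ω : Traj 1 1 1 T, p ω ≠ 0 → ∀ t : ℕ, t + 1 < T → Xat ω t = Yat ω (t + 1)) ∧
    -- leakage lower bound
    ((T - 1 : ℝ) / T ≤
      mutInfo p (fun ω => (ω.1, ω.2.1)) (fun ω => ω.2.2) / T) := by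
  intro p
  refine ⟨fun ω hω t ht => ?_, fun ω hω t ht => ?_, ?_⟩
  · rw [(followsFlip_of_jointA_ne_zero hω).Sat_succ ht]
    obtain ⟨h0, h1⟩ := Xat_mem_Icc ω t
    constructor <;> omega
  · exact ((followsFlip_of_jointA_ne_zero hω).Yat_succ ht).symm
  rcases T with _ | n
  · simp
  have hMI : mutInfo p (fun ω => (ω.1, ω.2.1)) (fun ω => ω.2.2) = ent p fun ω => ω.2.2 :=
    mutInfo_eq_ent_of_ae_eq_comp (f := fun a => flipOutput a.1 a.2) fun ω hω =>
      (followsFlip_iff_eq_flipOutput ω).1 (followsFlip_of_jointA_ne_zero hω)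
  have hent : (n : ℝ) ≤ ent p fun ω => ω.2.2 :=
    calc (n : ℝ) = -Real.logb 2 ((1 / 2) ^ n) := by
          rw [one_div, inv_pow, Real.logb_inv, Real.logb_pow, Real.logb_self_eq_one one_lt_two,
            mul_one, neg_neg]
      _ ≤ ent p fun ω => ω.2.2 :=
          neg_logb_le_ent_of_pr_le (isPMF_jointA_binFlipPolicy hPS1) _
            (pr_output_jointA_binFlipPolicy_le hPS1)
  rw [hMI]
  push_cast
  rw [add_sub_cancel_right]
  exact div_le_div_of_nonneg_right hent (by positivity)

/-- In the binary model with i.i.d. equiprobable demand independent of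
`S₁`, dynamics `S_{t+1} = S_t + Y_t - X_t` and the deterministic policy `Y_t = 1 - S_t`:
the policy is feasible (`S_{t+1} ∈ 𝒮` a.s.), `X_t = Y_{t+1}` a.s. (so `X^{T-1}` is a
function of `Y^T`), and the leakage satisfies `(1/T) I(S₁, X^T; Y^T) ≥ (T-1)/T`. -/
theorem binary_flip_policy_leakage (T : ℕ) (hT : 1 ≤ T)
    (PS1 : Fin 2 → ℝ) (hPS1 : IsPMF PS1) :
    let p := jointA (mx := 1) (my := 1) (ms := 1) PS1 (fun _ => (1 / 2 : ℝ))
      binFlipPolicy T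
    -- feasibility: on the support, the battery state stays in 𝒮 = {0, 1}
    (∀ ω : Traj 1 1 1 T, p ω ≠ 0 → ∀ t : ℕ, t < T →
        0 ≤ Sat ω (t + 1) ∧ Sat ω (t + 1) ≤ 1) ∧
    -- on the support, X_t = Y_{t+1}
    (∀ ω : Traj 1 1 1 T, p ω ≠ 0 → ∀ t : ℕ, t + 1 < T → Xat ω t = Yat ω (t + 1)) ∧
    -- leakage lower bound
    ((T - 1 : ℝ) / T ≤
      mutInfo p (fun ω => (ω.1, ω.2.1)) (fun ω => ω.2.2) / T) :=
  binary_flip_policy_leakage_general T PS1 hPS1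

end SmartMeter
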